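/- Let G be a bipartite graph with equipartition V(G) = X ∪ Y that has no 2-factor, and let U ⊆ X be a minimal deficient set with |U| = k. Then deg(u) ≤ k for every u ∈ U, and at least k − 1 vertices of U have degree at most k − 1. -/

import Mathlib

/-- Number of neighbours in `U` of the vertex `y`, for the bipartite graph with
parts `α`, `β` given by the relation `R`. -/
noncomputable def nbrIn {α β : Type*} (R : α → β → Prop) (U : Set α) (y : β) : ℕ :=
  {x | x ∈ U ∧ R x y}.ncard

/-- `|N^(2)(U)|`: each neighbour of `U` is counted with multiplicity
`min 2 (number of its neighbours in U)`. -/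
noncomputable def N2 {α β : Type*} [Fintype β] (R : α → β → Prop) (U : Set α) : ℕ :=
  ∑ y : β, min 2 (nbrIn R U y)

/-- `U` is a deficient set: `|N^(2)(U)| < 2|U|`. -/
def Deficient {α β : Type*} [Fintype β] (R : α → β → Prop) (U : Set α) : Prop :=
  N2 R U < 2 * U.ncard

/-- `U` is a minimal deficient set. -/
def MinimalDeficient {α β : Type*} [Fintype β] (R : α → β → Prop) (U : Set α) : Prop :=
  Deficient R U ∧ ∀ W ⊂ U, ¬ Deficient R W

/-- Degree of a vertex `x ∈ α` in the bipartite graph `R`. -/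
noncomputable def degX {α β : Type*} (R : α → β → Prop) (x : α) : ℕ := {y | R x y}.ncard

/-- Degree of a vertex `y ∈ β` in the bipartite graph `R`. -/
noncomputable def degY {α β : Type*} (R : α → β → Prop) (y : β) : ℕ := {x | R x y}.ncard

/-- The bipartite graph `R` has a 2-factor: a spanning subgraph in which every
vertex has degree exactly `2`. -/
def HasBipTwoFactor {α β : Type*} (R : α → β → Prop) : Prop :=
  ∃ H : α → β → Prop, (∀ x y, H x y → R x y) ∧
    (∀ x, {y | H x y}.ncard = 2) ∧ (∀ y, {x | H x y}.ncard = 2)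


/-!
Split the neighbours of `U` into the shared ones `A` (at least two neighbours in `U`, weight 2
in `N2`) and the unique ones `C` (weight 1), so `N2 U = 2|A| + |C| < 2k`. Deleting `u` from `U`
loses at least one unit of `N2` per private neighbour of `u`, so minimality leaves every `u` at
most one private neighbour, whence `deg u ≤ |A| + 1 ≤ k`. Private neighbourhoods are disjoint
subsets of `C`: if two vertices of `U` have one, then `|A| ≤ k - 2` and all degrees are at most
`k - 1`; otherwise the `k - 1` vertices without one have degree at most `|A| ≤ k - 1`.
-/

open Finset

section NeighbourClasses

variable {α β : Type*} (R : α → β → Prop) (U : Set α)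

open Classical in
noncomputable def sharedNbrs [Fintype β] : Finset β := {y | 2 ≤ nbrIn R U y}

open Classical in
noncomputable def uniqueNbrs [Fintype β] : Finset β := {y | nbrIn R U y = 1}

open Classical in
noncomputable def privateNbrs [Fintype β] (u : α) : Finset β := {y | R u y ∧ nbrIn R U y = 1}

variable {R U}

lemma nbrIn_mono [Finite α] {W : Set α} (h : W ⊆ U) (y : β) : nbrIn R W y ≤ nbrIn R U y :=
  Set.ncard_le_ncard (fun _ hx => ⟨h hx.1, hx.2⟩)

lemma nbrIn_pos [Finite α] {u : α} (hu : u ∈ U) {y : β} (h : R u y) : 0 < nbrIn R U y :=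
  (Set.ncard_pos).mpr ⟨u, hu, h⟩

lemma nbrIn_diff_singleton {u : α} (hu : u ∈ U) {y : β} (h : R u y) :
    nbrIn R (U \ {u}) y = nbrIn R U y - 1 := by
  have hset : {x | x ∈ U \ {u} ∧ R x y} = {x | x ∈ U ∧ R x y} \ {u} := by
    ext x
    simp only [Set.mem_ofPred_eq, Set.mem_sdiff, Set.mem_singleton_iff]
    tauto
  rw [nbrIn, hset, Set.ncard_sdiff_singleton_of_mem (show u ∈ {x | x ∈ U ∧ R x y} from ⟨hu, h⟩),
    nbrIn]

lemma eq_of_mem_privateNbrs [Finite α] [Fintype β] {u₁ u₂ : α} (hu₁ : u₁ ∈ U) (hu₂ : u₂ ∈ U)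
    {y : β} (hy₁ : y ∈ privateNbrs R U u₁) (hy₂ : y ∈ privateNbrs R U u₂) : u₁ = u₂ := by
  simp only [privateNbrs, mem_filter, mem_univ, true_and] at hy₁ hy₂
  exact ((Set.ncard_le_one).mp hy₁.2.le) u₁ ⟨hu₁, hy₁.1⟩ u₂ ⟨hu₂, hy₂.1⟩

variable [Fintype β]

lemma N2_eq_two_mul_card_sharedNbrs_add_card_uniqueNbrs :
    N2 R U = 2 * #(sharedNbrs R U) + #(uniqueNbrs R U) := by
  classical
  have hmin (n : ℕ) : min 2 n = (if 2 ≤ n then 2 else 0) + if n = 1 then 1 else 0 := by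
    split_ifs <;> omega
  simp only [N2, hmin, sum_add_distrib, ← sum_filter, sum_const, smul_eq_mul, mul_one,
    sharedNbrs, uniqueNbrs, mul_comm 2]

lemma degX_le_card_sharedNbrs_add_card_privateNbrs [Finite α] {u : α} (hu : u ∈ U) :
    degX R u ≤ #(sharedNbrs R U) + #(privateNbrs R U u) := by
  classical
  have hsub : {y | R u y} ⊆ ↑(sharedNbrs R U ∪ privateNbrs R U u) := by
    intro y hy
    have := nbrIn_pos hu hy
    simp only [sharedNbrs, privateNbrs, coe_union, coe_filter, mem_univ, true_and,
      Set.mem_union, Set.mem_ofPred_eq]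
    rcases Nat.lt_or_ge (nbrIn R U y) 2 with h | h
    · exact Or.inr ⟨hy, by omega⟩
    · exact Or.inl h
  calc degX R u ≤ #(sharedNbrs R U ∪ privateNbrs R U u) :=
        (Set.ncard_le_ncard hsub).trans (Set.ncard_coe_finset _).le
    _ ≤ _ := card_union_le _ _

lemma card_privateNbrs_add_N2_diff_singleton_le [Finite α] {u : α} (hu : u ∈ U) :
    #(privateNbrs R U u) + N2 R (U \ {u}) ≤ N2 R U := by
  classical
  rw [privateNbrs, card_filter, N2, N2, ← sum_add_distrib]
  refine sum_le_sum fun y _ => ?_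
  by_cases hy : R u y
  · have := nbrIn_diff_singleton hu hy
    split_ifs <;> omega
  · have := nbrIn_mono (R := R) (Set.sdiff_subset : U \ {u} ⊆ U) y
    simp only [hy, false_and, if_false]
    omega

end NeighbourClasses

section MinimalDeficient

variable {α β : Type*} [Fintype β] {R : α → β → Prop} {U : Set α}

lemma card_privateNbrs_le_one [Finite α] (hU : MinimalDeficient R U) {u : α} (hu : u ∈ U) :
    #(privateNbrs R U u) ≤ 1 := by
  have hdiff : ¬ Deficient R (U \ {u}) := hU.2 _ (Set.sdiff_singleton_ssubset.mpr hu)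
  have hdef : Deficient R U := hU.1
  have hcard := Set.ncard_sdiff_singleton_of_mem hu
  have hpos : 0 < U.ncard := (Set.ncard_pos).mpr ⟨u, hu⟩
  have := card_privateNbrs_add_N2_diff_singleton_le (R := R) hu
  unfold Deficient at hdef hdiff
  omega

lemma degX_le_card_sharedNbrs_add_one [Finite α] (hU : MinimalDeficient R U) {u : α}
    (hu : u ∈ U) : degX R u ≤ #(sharedNbrs R U) + 1 :=
  (degX_le_card_sharedNbrs_add_card_privateNbrs hu).trans
    (Nat.add_le_add_left (card_privateNbrs_le_one hU hu) _)

end MinimalDeficient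

section Counting

variable {α β : Type*} [Fintype α] [Fintype β] (R : α → β → Prop) (U : Set α)

open Classical in
lemma card_filter_privateNbrs_nonempty_le_card_uniqueNbrs :
    #{u | u ∈ U ∧ (privateNbrs R U u).Nonempty} ≤ #(uniqueNbrs R U) := by
  classical
  set P : Finset α := {u | u ∈ U ∧ (privateNbrs R U u).Nonempty}
  have hdisj : (P : Set α).PairwiseDisjoint (privateNbrs R U) := by
    intro u₁ hu₁ u₂ hu₂ hne
    refine disjoint_left.mpr fun y hy₁ hy₂ => hne ?_
    simp only [P, coe_filter, mem_univ, true_and, Set.mem_ofPred_eq] at hu₁ hu₂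
    exact eq_of_mem_privateNbrs hu₁.1 hu₂.1 hy₁ hy₂
  have hsub : P.biUnion (privateNbrs R U) ⊆ uniqueNbrs R U := by
    intro y hy
    simp only [mem_biUnion, privateNbrs, uniqueNbrs, mem_filter, mem_univ, true_and] at hy ⊢
    obtain ⟨_, _, _, hy⟩ := hy
    exact hy
  calc #P = ∑ _u ∈ P, 1 := card_eq_sum_ones P
    _ ≤ ∑ u ∈ P, #(privateNbrs R U u) :=
        sum_le_sum fun u hu => card_pos.mpr (mem_filter.mp hu).2.2
    _ = #(P.biUnion (privateNbrs R U)) := (card_biUnion hdisj).symm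
    _ ≤ #(uniqueNbrs R U) := card_le_card hsub

open Classical in
lemma two_mul_card_sharedNbrs_add_card_le_N2 :
    2 * #(sharedNbrs R U) + #{u | u ∈ U ∧ (privateNbrs R U u).Nonempty} ≤ N2 R U := by
  rw [N2_eq_two_mul_card_sharedNbrs_add_card_uniqueNbrs]
  exact Nat.add_le_add_left (card_filter_privateNbrs_nonempty_le_card_uniqueNbrs R U) _

end Counting

theorem minimalDeficient_degree_bounds_general {α β : Type*} [Fintype α] [Fintype β]
    (R : α → β → Prop)
    (U : Set α) (k : ℕ) (hU : MinimalDeficient R U) (hk : U.ncard = k) :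
    (∀ u ∈ U, degX R u ≤ k) ∧ k - 1 ≤ {u : α | u ∈ U ∧ degX R u ≤ k - 1}.ncard := by
  classical
  set P : Set α := {u | u ∈ U ∧ (privateNbrs R U u).Nonempty}
  have hcount : 2 * #(sharedNbrs R U) + P.ncard < 2 * k := by
    have := two_mul_card_sharedNbrs_add_card_le_N2 R U
    rw [← hk, Set.ncard_eq_toFinset_card' P, Set.toFinset_ofPred]
    exact this.trans_lt hU.1
  refine ⟨fun u hu => (degX_le_card_sharedNbrs_add_one hU hu).trans (by omega), ?_⟩
  by_cases hP : 2 ≤ P.ncard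
  · have hsub : U ⊆ {u | u ∈ U ∧ degX R u ≤ k - 1} := fun u hu =>
      ⟨hu, (degX_le_card_sharedNbrs_add_one hU hu).trans (by omega)⟩
    have := Set.ncard_le_ncard hsub
    omega
  · have hsub : U ⊆ {u | u ∈ U ∧ degX R u ≤ k - 1} ∪ P := by
      intro u hu
      by_cases hpriv : (privateNbrs R U u).Nonempty
      · exact Or.inr ⟨hu, hpriv⟩
      · have := degX_le_card_sharedNbrs_add_card_privateNbrs (R := R) hu
        rw [Finset.not_nonempty_iff_eq_empty.mp hpriv, card_empty] at this
        exact Or.inl ⟨hu, by omega⟩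
    have := (Set.ncard_le_ncard hsub).trans (Set.ncard_union_le _ _)
    omega

/-- If a bipartite graph with equipartition has no 2-factor and `U` is a minimal
deficient set with `|U| = k`, then every vertex of `U` has degree at most `k`, and at
least `k - 1` vertices of `U` have degree at most `k - 1`. -/
theorem minimalDeficient_degree_bounds {α β : Type*} [Fintype α] [Fintype β]
    (R : α → β → Prop) (hcard : Fintype.card α = Fintype.card β)
    (hno : ¬ HasBipTwoFactor R)
    (U : Set α) (k : ℕ) (hU : MinimalDeficient R U) (hk : U.ncard = k) :
    (∀ u ∈ U, degX R u ≤ k) ∧ k - 1 ≤ {u : α | u ∈ U ∧ degX R u ≤ k - 1}.ncard :=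
  minimalDeficient_degree_bounds_general R U k hU hk
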